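/- Let $h : U \to [m]$ be a uniformly random function from a finite set $U$ to $[m] = \{0, \ldots, m-1\}$ with $m \ge 1$, let $\varepsilon : U \to \{-1, 1\}$ be a uniformly random sign function independent of $h$, and let $v : U \times [m] \to \mathbb{R}$ be a fixed value function with $\sum_{j \in [m]} v(x, j) = 0$ for all $x \in U$. Then for all $p \ge 2$: $\frac{1}{2} \|\sum_{x \in U} \varepsilon(x) v(x, h(x))\|_p \le \|\sum_{x \in U} v(x, h(x))\|_p \le 2 \|\sum_{x \in U} \varepsilon(x) v(x, h(x))\|_p$. -/

import Mathlib

/-!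
Fix the signs `ε`. Both `h ↦ ∑ x, v x (h x)` and `h ↦ ∑ x, ε x * v x (h x)` have mean zero
over `h`, since every `v x` sums to zero. For a mean-zero `F`, Jensen's inequality gives
`𝔼 |F h| ^ p ≤ 𝔼 |F h - F h'| ^ p` with `h'` an independent copy of `h`, and
`|a - b| ^ p ≤ 2 ^ (p - 1) * (|a| ^ p + |b| ^ p)` bounds the right side by `2 ^ p * 𝔼 |F h| ^ p`.
The two symmetrized differences have the same distribution: exchanging `h x` and `h' x` at
every `x` with a negative sign turns one into the other. Hence each `p`-th moment is at most
`2 ^ p` times the other; average over `ε` and take `p`-th roots.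
-/

open MeasureTheory Finset
open scoped BigOperators

section Moments

variable {Ω : Type*} [Fintype Ω] [Nonempty Ω] {p : ℝ}

lemma rpow_expect_le_expect_rpow (hp : 1 ≤ p) {z : Ω → ℝ} (hz : ∀ ω, 0 ≤ z ω) :
    (𝔼 ω, z ω) ^ p ≤ 𝔼 ω, z ω ^ p := by
  have hcard : (0 : ℝ) < Fintype.card Ω := by exact_mod_cast Fintype.card_pos
  simpa [Fintype.expect_eq_sum_div_card, ← sum_div, div_eq_inv_mul, mul_sum,
    hcard.ne'] using
    Real.rpow_arith_mean_le_arith_mean_rpow univ (fun _ => (Fintype.card Ω : ℝ)⁻¹) z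
      (fun _ _ => by positivity) (by simp [hcard.ne']) (fun ω _ => hz ω) hp

lemma abs_rpow_le_expect_abs_sub_rpow (hp : 1 ≤ p) {F : Ω → ℝ} (hF : 𝔼 ω, F ω = 0) (ω : Ω) :
    |F ω| ^ p ≤ 𝔼 ω', |F ω - F ω'| ^ p := by
  have hmean : F ω = 𝔼 ω', (F ω - F ω') := by
    rw [expect_sub_distrib, hF, Fintype.expect_const, sub_zero]
  calc |F ω| ^ p = |𝔼 ω', (F ω - F ω')| ^ p := by rw [← hmean]
    _ ≤ (𝔼 ω', |F ω - F ω'|) ^ p :=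
        Real.rpow_le_rpow (abs_nonneg _) (abs_expect_le _ _) (by linarith)
    _ ≤ 𝔼 ω', |F ω - F ω'| ^ p := rpow_expect_le_expect_rpow hp fun _ => abs_nonneg _

lemma abs_sub_rpow_le (hp : 1 ≤ p) (a b : ℝ) :
    |a - b| ^ p ≤ 2 ^ (p - 1) * (|a| ^ p + |b| ^ p) :=
  calc |a - b| ^ p ≤ (|a| + |b|) ^ p :=
        Real.rpow_le_rpow (abs_nonneg _) (abs_sub _ _) (by linarith)
    _ ≤ 2 ^ (p - 1) * (|a| ^ p + |b| ^ p) := by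
        exact_mod_cast
          NNReal.rpow_add_le_mul_rpow_add_rpow ⟨|a|, abs_nonneg a⟩ ⟨|b|, abs_nonneg b⟩ hp

lemma expect_expect_abs_sub_rpow_le (hp : 1 ≤ p) (G : Ω → ℝ) :
    𝔼 ω, 𝔼 ω', |G ω - G ω'| ^ p ≤ 2 ^ p * 𝔼 ω, |G ω| ^ p :=
  calc 𝔼 ω, 𝔼 ω', |G ω - G ω'| ^ p
      ≤ 𝔼 ω, 𝔼 ω', 2 ^ (p - 1) * (|G ω| ^ p + |G ω'| ^ p) :=
        expect_le_expect fun ω _ => expect_le_expect fun ω' _ => abs_sub_rpow_le hp _ _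
    _ = 2 ^ (p - 1) * (𝔼 ω, |G ω| ^ p + 𝔼 ω, |G ω| ^ p) := by
        simp_rw [← mul_expect, expect_add_distrib, Fintype.expect_const]
    _ = 2 ^ p * 𝔼 ω, |G ω| ^ p := by
        rw [← two_mul, ← mul_assoc, ← Real.rpow_add_one two_ne_zero, sub_add_cancel]

lemma expect_abs_rpow_le_of_expect_abs_sub_rpow_eq (hp : 1 ≤ p) {F G : Ω → ℝ}
    (hF : 𝔼 ω, F ω = 0)
    (hFG : 𝔼 ω, 𝔼 ω', |F ω - F ω'| ^ p = 𝔼 ω, 𝔼 ω', |G ω - G ω'| ^ p) :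
    𝔼 ω, |F ω| ^ p ≤ 2 ^ p * 𝔼 ω, |G ω| ^ p :=
  calc 𝔼 ω, |F ω| ^ p ≤ 𝔼 ω, 𝔼 ω', |F ω - F ω'| ^ p :=
        expect_le_expect fun ω _ => abs_rpow_le_expect_abs_sub_rpow hp hF ω
    _ = 𝔼 ω, 𝔼 ω', |G ω - G ω'| ^ p := hFG
    _ ≤ 2 ^ p * 𝔼 ω, |G ω| ^ p := expect_expect_abs_sub_rpow_le hp G

end Moments

section RandomFunctions

variable {U α : Type*} [Fintype U] [DecidableEq U] [Fintype α]

lemma expect_comp_eval [Nonempty α] (g : α → ℝ) (x : U) : 𝔼 h : U → α, g (h x) = 𝔼 j, g j :=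
  calc 𝔼 h : U → α, g (h x) = 𝔼 q : α × ({y // y ≠ x} → α), g q.1 :=
        Fintype.expect_equiv (Equiv.funSplitAt x α) _ _ fun _ => rfl
    _ = 𝔼 j, g j := by
        rw [← univ_product_univ, expect_product]
        simp only [Fintype.expect_const]

lemma expect_sum_eval_eq_zero [Nonempty α] (u : U → α → ℝ) (hu : ∀ x, ∑ j, u x j = 0) :
    𝔼 h : U → α, ∑ x, u x (h x) = 0 := by
  rw [expect_sum_comm]
  refine sum_eq_zero fun x _ => ?_
  rw [expect_comp_eval, Fintype.expect_eq_sum_div_card, hu, zero_div]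

lemma expect_expect_signed_sum_sub_eq (v : U → α → ℝ) (ε : U → Bool) (f : ℝ → ℝ) :
    𝔼 h : U → α, 𝔼 h' : U → α, f (∑ x, (if ε x then (1 : ℝ) else -1) * v x (h x) -
        ∑ x, (if ε x then (1 : ℝ) else -1) * v x (h' x)) =
      𝔼 h : U → α, 𝔼 h' : U → α, f (∑ x, v x (h x) - ∑ x, v x (h' x)) := by
  let swap : (U → α) × (U → α) → (U → α) × (U → α) := fun q =>
    (fun x => if ε x then q.1 x else q.2 x, fun x => if ε x then q.2 x else q.1 x)
  have hswap : Function.Involutive swap := fun q => by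
    ext x <;> by_cases hx : ε x <;> simp [swap, hx]
  rw [← expect_product', ← expect_product', univ_product_univ]
  refine Fintype.expect_bijective swap hswap.bijective _ _ fun q => ?_
  simp only [← sum_sub_distrib, ← mul_sub]
  congr 2 with x
  by_cases hx : ε x <;> simp [swap, hx]

variable [Nonempty α] {p : ℝ}

lemma expect_abs_signed_sum_rpow_le (hp : 1 ≤ p) (v : U → α → ℝ) (hv : ∀ x, ∑ j, v x j = 0)
    (ε : U → Bool) :
    𝔼 h : U → α, |∑ x, (if ε x then (1 : ℝ) else -1) * v x (h x)| ^ p ≤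
      2 ^ p * 𝔼 h : U → α, |∑ x, v x (h x)| ^ p :=
  expect_abs_rpow_le_of_expect_abs_sub_rpow_eq hp
    (expect_sum_eval_eq_zero _ fun x => by rw [← mul_sum, hv, mul_zero])
    (expect_expect_signed_sum_sub_eq v ε fun t => |t| ^ p)

lemma expect_abs_sum_rpow_le (hp : 1 ≤ p) (v : U → α → ℝ) (hv : ∀ x, ∑ j, v x j = 0)
    (ε : U → Bool) :
    𝔼 h : U → α, |∑ x, v x (h x)| ^ p ≤
      2 ^ p * 𝔼 h : U → α, |∑ x, (if ε x then (1 : ℝ) else -1) * v x (h x)| ^ p :=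
  expect_abs_rpow_le_of_expect_abs_sub_rpow_eq hp (expect_sum_eval_eq_zero v hv)
    (expect_expect_signed_sum_sub_eq v ε fun t => |t| ^ p).symm

end RandomFunctions

lemma integral_uniformOfFintype {Ω : Type*} [Fintype Ω] [Nonempty Ω] [MeasurableSpace Ω]
    [MeasurableSingletonClass Ω] (f : Ω → ℝ) :
    ∫ ω, f ω ∂(PMF.uniformOfFintype Ω).toMeasure = 𝔼 ω, f ω := by
  simp [PMF.integral_eq_sum, Fintype.expect_eq_sum_div_card, div_eq_inv_mul, mul_sum]

lemma rpow_one_div_le_of_le_rpow_mul {p A B c : ℝ} (hp : 0 < p) (hA : 0 ≤ A) (hB : 0 ≤ B)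
    (hc : 0 ≤ c) (h : A ≤ c ^ p * B) : A ^ (1 / p) ≤ c * B ^ (1 / p) :=
  calc A ^ (1 / p) ≤ (c ^ p * B) ^ (1 / p) := Real.rpow_le_rpow hA h (by positivity)
    _ = c * B ^ (1 / p) := by
        rw [Real.mul_rpow (by positivity) hB, ← Real.rpow_mul hc, mul_one_div_cancel hp.ne',
          Real.rpow_one]

theorem sampling_symmetrize (U : Type*) [Fintype U] [DecidableEq U]
    (m : ℕ) [NeZero m]
    (v : U → Fin m → ℝ) (hv : ∀ x, ∑ j, v x j = 0) (p : ℝ) (hp : 2 ≤ p) :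
    let μ := (PMF.uniformOfFintype ((U → Fin m) × (U → Bool))).toMeasure
    let S := fun ω : (U → Fin m) × (U → Bool) =>
      ∑ x, (if ω.2 x then (1 : ℝ) else -1) * v x (ω.1 x)
    let T := fun ω : (U → Fin m) × (U → Bool) => ∑ x, v x (ω.1 x)
    1 / 2 * (∫ ω, |S ω| ^ p ∂μ) ^ (1 / p) ≤ (∫ ω, |T ω| ^ p ∂μ) ^ (1 / p) ∧
      (∫ ω, |T ω| ^ p ∂μ) ^ (1 / p) ≤ 2 * (∫ ω, |S ω| ^ p ∂μ) ^ (1 / p) := by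
  intro μ S T
  have hp1 : 1 ≤ p := by linarith
  have hS : ∫ ω, |S ω| ^ p ∂μ = 𝔼 ε : U → Bool, 𝔼 h : U → Fin m,
      |∑ x, (if ε x then (1 : ℝ) else -1) * v x (h x)| ^ p := by
    rw [integral_uniformOfFintype, ← univ_product_univ, expect_product, expect_comm]
  have hT : ∫ ω, |T ω| ^ p ∂μ = 𝔼 _ε : U → Bool, 𝔼 h : U → Fin m, |∑ x, v x (h x)| ^ p := by
    rw [integral_uniformOfFintype, ← univ_product_univ, expect_product, expect_comm]
  have hS_le : ∫ ω, |S ω| ^ p ∂μ ≤ 2 ^ p * ∫ ω, |T ω| ^ p ∂μ := by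
    rw [hS, hT, mul_expect]
    exact expect_le_expect fun ε _ => expect_abs_signed_sum_rpow_le hp1 v hv ε
  have hT_le : ∫ ω, |T ω| ^ p ∂μ ≤ 2 ^ p * ∫ ω, |S ω| ^ p ∂μ := by
    rw [hS, hT, mul_expect]
    exact expect_le_expect fun ε _ => expect_abs_sum_rpow_le hp1 v hv ε
  have hS_nonneg : 0 ≤ ∫ ω, |S ω| ^ p ∂μ := integral_nonneg fun _ => by positivity
  have hT_nonneg : 0 ≤ ∫ ω, |T ω| ^ p ∂μ := integral_nonneg fun _ => by positivity
  have hp0 : 0 < p := by linarith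
  constructor
  · linarith [rpow_one_div_le_of_le_rpow_mul hp0 hS_nonneg hT_nonneg zero_le_two hS_le]
  · exact rpow_one_div_le_of_le_rpow_mul hp0 hT_nonneg hS_nonneg zero_le_two hT_le
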